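/- Let d ≥ 2 and let (m_p)_{p∈P} be a finite family of integers with each m_p ≥ 2 such that ∑_p C(m_p,2) = C(d,2). If ∑_p (m_p - 1) > (d+3)(d-1)/4, then ∑_p (m_p-1)^2 < (3/4)(d-1)^2. -/

import Mathlib

open Finset

lemma Nat.two_mul_choose_two_eq (n : ℕ) : 2 * n.choose 2 = (n - 1) ^ 2 + (n - 1) := by
  cases n with
  | zero => rfl
  | succ k =>
    have h := Nat.add_one_mul_choose_eq k 1
    simp only [Nat.choose_one_right] at h
    simp only [Nat.add_sub_cancel]
    linarith

lemma sum_sub_one_sq_add_sum_sub_one {ι : Type*} (s : Finset ι) (m : ι → ℕ) (d : ℕ)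
    (hsum : ∑ p ∈ s, (m p).choose 2 = d.choose 2) :
    ∑ p ∈ s, (m p - 1) ^ 2 + ∑ p ∈ s, (m p - 1) = (d - 1) ^ 2 + (d - 1) := by
  rw [← sum_add_distrib, ← Nat.two_mul_choose_two_eq, ← hsum, mul_sum]
  exact sum_congr rfl fun p _ => (Nat.two_mul_choose_two_eq (m p)).symm

theorem stmt2_general {P : Type*} [Fintype P] (d : ℕ) (m : P → ℕ)
    (hsum : ∑ p, (m p).choose 2 = d.choose 2)
    (hbig : (d + 3) * (d - 1) < 4 * ∑ p, (m p - 1)) :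
    4 * ∑ p, (m p - 1) ^ 2 < 3 * (d - 1) ^ 2 := by
  have htotal := sum_sub_one_sq_add_sum_sub_one univ m d hsum
  have hsplit : 4 * ((d - 1) ^ 2 + (d - 1)) = (d + 3) * (d - 1) + 3 * (d - 1) ^ 2 := by
    cases d with
    | zero => rfl
    | succ e => simp only [Nat.add_sub_cancel]; ring
  omega

theorem stmt2 {P : Type*} [Fintype P] (d : ℕ) (hd : 2 ≤ d) (m : P → ℕ)
    (hm : ∀ p, 2 ≤ m p) (hsum : ∑ p, (m p).choose 2 = d.choose 2)
    (hbig : (d + 3) * (d - 1) < 4 * ∑ p, (m p - 1)) :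
    4 * ∑ p, (m p - 1) ^ 2 < 3 * (d - 1) ^ 2 :=
  stmt2_general d m hsum hbig
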